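/- arXiv:2602.23885 — 5 statements merged into one kernel-verified Lean document; each statement's English description precedes it below -/
import Mathlib

section
/- Let M be a nonnegative k×k matrix satisfying the detailed-balance condition π_i m_{ij} = π_j m_{ji} for all i,j, where π_i > 0 and Σ_i π_i = 1. Let r_i = Σ_j m_{ij} be the row sums. Then the spectral radius of M satisfies ρ(M) ≥ √(Σ_i π_i r_i²). -/
/-!
Conjugating by `D = diag(√π)` turns detailed balance into symmetry of `S = D M D⁻¹`, a matrix
with the same spectrum as `M`. The vector `x = √π` has norm `1` and `‖S x‖² = Σ πᵢ rᵢ²`, while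
a symmetric operator stretches no vector by more than its largest `|eigenvalue|`; that
eigenvalue of `M` therefore has modulus at least `√(Σ πᵢ rᵢ²)`.
-/

/-- The spectral radius of a real square matrix: the supremum of the absolute
values of its complex eigenvalues. -/
noncomputable def specRad {k : ℕ} (M : Matrix (Fin k) (Fin k) ℝ) : ℝ :=
  sSup {x : ℝ | ∃ μ : ℂ, μ ∈ spectrum ℂ (M.map (Complex.ofReal ·)) ∧ x = ‖μ‖}

namespace LinearMap.IsSymmetric

variable {𝕜 E : Type*} [RCLike 𝕜] [NormedAddCommGroup E] [InnerProductSpace 𝕜 E]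
  [FiniteDimensional 𝕜 E] [Nontrivial E] {T : E →ₗ[𝕜] E}

theorem exists_hasEigenvalue_norm_apply_le (hT : T.IsSymmetric) (x : E) :
    ∃ μ : ℝ, Module.End.HasEigenvalue T μ ∧ ‖T x‖ ≤ |μ| * ‖x‖ := by
  have hn : Module.finrank 𝕜 E = Module.finrank 𝕜 E := rfl
  have : Nonempty (Fin (Module.finrank 𝕜 E)) := ⟨⟨0, Module.finrank_pos⟩⟩
  obtain ⟨i, -, hi⟩ := Finset.exists_max_image Finset.univ (fun i => |hT.eigenvalues hn i|)
    Finset.univ_nonempty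
  refine ⟨_, hT.hasEigenvalue_eigenvalues hn i, ?_⟩
  set b := hT.eigenvectorBasis hn
  rw [← b.repr.norm_map, ← b.repr.norm_map x, EuclideanSpace.norm_eq, EuclideanSpace.norm_eq,
    ← Real.sqrt_sq (abs_nonneg _), ← Real.sqrt_mul (sq_nonneg _), Finset.mul_sum]
  gcongr with j
  rw [hT.eigenvectorBasis_apply_self_apply, norm_mul, mul_pow, RCLike.norm_ofReal]
  exact mul_le_mul_of_nonneg_right (pow_le_pow_left₀ (abs_nonneg _) (hi j (Finset.mem_univ j)) 2)
    (sq_nonneg _)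

end LinearMap.IsSymmetric

namespace Matrix

variable {n : Type*} [Fintype n] [DecidableEq n]

theorem spectrum_diagonal_mul_mul_diagonal_inv {K : Type*} [Field K] {d : n → K}
    (hd : ∀ i, d i ≠ 0) (A : Matrix n n K) :
    spectrum K (diagonal d * A * diagonal d⁻¹) = spectrum K A :=
  spectrum.units_conjugate (u := ⟨diagonal d, diagonal d⁻¹, by simp [hd], by simp [hd]⟩)

theorem map_mem_spectrum_map {K L : Type*} [Field K] [Field L] (f : K →+* L) {A : Matrix n n K}
    {r : K} (hr : r ∈ spectrum K A) : f r ∈ spectrum L (A.map f) := by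
  rw [mem_spectrum_iff_isRoot_charpoly] at hr ⊢
  rw [charpoly_map]
  exact hr.map

noncomputable def sqrtConj (π : n → ℝ) (M : Matrix n n ℝ) : Matrix n n ℝ :=
  diagonal (fun i => √(π i)) * M * diagonal (fun i => √(π i))⁻¹

variable {π : n → ℝ} {M : Matrix n n ℝ}

theorem sqrtConj_apply (i j : n) : sqrtConj π M i j = √(π i) * M i j / √(π j) := by
  simp [sqrtConj, diagonal_mul, mul_diagonal, div_eq_mul_inv]

theorem isHermitian_sqrtConj (hπ : ∀ i, 0 < π i) (hDB : ∀ i j, π i * M i j = π j * M j i) :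
    (sqrtConj π M).IsHermitian := by
  ext i j
  have hij := hDB i j
  rw [← Real.sq_sqrt (hπ i).le, ← Real.sq_sqrt (hπ j).le] at hij
  simp only [conjTranspose_apply, star_trivial, sqrtConj_apply]
  rw [div_eq_div_iff (Real.sqrt_pos.2 (hπ i)).ne' (Real.sqrt_pos.2 (hπ j)).ne']
  linear_combination -hij

theorem spectrum_sqrtConj (hπ : ∀ i, 0 < π i) : spectrum ℝ (sqrtConj π M) = spectrum ℝ M :=
  spectrum_diagonal_mul_mul_diagonal_inv (fun i => (Real.sqrt_pos.2 (hπ i)).ne') M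

theorem sqrtConj_mulVec_sqrt (hπ : ∀ i, 0 < π i) :
    sqrtConj π M *ᵥ (fun i => √(π i)) = fun i => √(π i) * ∑ j, M i j := by
  funext i
  simp only [mulVec, dotProduct, sqrtConj_apply, Finset.mul_sum]
  refine Finset.sum_congr rfl fun j _ => ?_
  field_simp [(Real.sqrt_pos.2 (hπ j)).ne']

end Matrix

theorem norm_le_specRad {k : ℕ} {M : Matrix (Fin k) (Fin k) ℝ} {μ : ℂ}
    (hμ : μ ∈ spectrum ℂ (M.map (Complex.ofReal ·))) : ‖μ‖ ≤ specRad M :=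
  le_csSup (((M.map _).finite_spectrum.image (‖·‖)).bddAbove.mono <| by
    rintro _ ⟨ν, hν, rfl⟩
    exact ⟨ν, hν, rfl⟩) ⟨μ, hμ, rfl⟩

theorem stmt_5_general {k : ℕ} (M : Matrix (Fin k) (Fin k) ℝ) (π : Fin k → ℝ)
    (hπ : ∀ i, 0 < π i) (hπsum : ∑ i, π i = 1)
    (hDB : ∀ i j, π i * M i j = π j * M j i) :
    Real.sqrt (∑ i, π i * (∑ j, M i j) ^ 2) ≤ specRad M := by
  have : Nonempty (Fin k) := by
    by_contra h
    simp [not_nonempty_iff.mp h] at hπsum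
  set x : EuclideanSpace ℝ (Fin k) := WithLp.toLp 2 fun i => √(π i)
  have hT := Matrix.isSymmetric_toEuclideanLin_iff.mpr (Matrix.isHermitian_sqrtConj hπ hDB)
  obtain ⟨μ, hμ, hle⟩ := hT.exists_hasEigenvalue_norm_apply_le x
  have hμM : (μ : ℂ) ∈ spectrum ℂ (M.map (Complex.ofReal ·)) := by
    have := hμ.mem_spectrum
    rw [Matrix.spectrum_toLpLin, Matrix.spectrum_sqrtConj hπ] at this
    exact Matrix.map_mem_spectrum_map Complex.ofRealHom this
  have hx : ‖x‖ = 1 := by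
    simp [x, EuclideanSpace.norm_eq, Real.sq_sqrt (hπ _).le, hπsum]
  have hSx : ‖Matrix.toEuclideanLin (Matrix.sqrtConj π M) x‖ =
      √(∑ i, π i * (∑ j, M i j) ^ 2) := by
    simp [x, EuclideanSpace.norm_eq, Matrix.toLpLin_apply, Matrix.sqrtConj_mulVec_sqrt hπ,
      mul_pow, Real.sq_sqrt (hπ _).le]
  calc √(∑ i, π i * (∑ j, M i j) ^ 2)
      = ‖Matrix.toEuclideanLin (Matrix.sqrtConj π M) x‖ := hSx.symm
    _ ≤ |μ| * ‖x‖ := hle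
    _ = ‖(μ : ℂ)‖ := by rw [hx, mul_one, Complex.norm_real, Real.norm_eq_abs]
    _ ≤ specRad M := norm_le_specRad hμM

/-- For a nonnegative matrix M satisfying detailed balance
`π_i m_{ij} = π_j m_{ji}` with `π_i > 0` and `Σ π_i = 1`, and row sums
`r_i = Σ_j m_{ij}`, the spectral radius satisfies
`ρ(M) ≥ √(Σ_i π_i r_i²)`. -/
theorem stmt_5 {k : ℕ} (M : Matrix (Fin k) (Fin k) ℝ) (π : Fin k → ℝ)
    (hπ : ∀ i, 0 < π i) (hπsum : ∑ i, π i = 1)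
    (hM : ∀ i j, 0 ≤ M i j)
    (hDB : ∀ i j, π i * M i j = π j * M j i) :
    Real.sqrt (∑ i, π i * (∑ j, M i j) ^ 2) ≤ specRad M :=
  stmt_5_general M π hπ hπsum hDB
end

section
/- Let M be a nonnegative k×k matrix satisfying detailed balance π_i m_{ij} = π_j m_{ji} with π_i > 0, and let c_j = Σ_i m_{ij} be the column sums. Then ρ(M) ≥ √( (Σ_j c_j²/π_j) / (Σ_j 1/π_j) ). -/
open Matrix WithLp

namespace Matrix

variable {n : Type*} [Fintype n] [DecidableEq n]

lemma spectrum_mul_mul_inv {R : Type*} [CommRing R] {P : Matrix n n R} (hP : IsUnit P)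
    (A : Matrix n n R) : spectrum R (P * A * P⁻¹) = spectrum R A := by
  simpa [coe_units_inv] using spectrum.units_conjugate (R := R) (a := A) (u := hP.unit)

theorem IsHermitian.norm_mulVec_le {𝕜 : Type*} [RCLike 𝕜] {A : Matrix n n 𝕜}
    (hA : A.IsHermitian) {r : ℝ} (hr : 0 ≤ r) (hspec : ∀ μ ∈ spectrum 𝕜 A, ‖μ‖ ≤ r)
    (x : n → 𝕜) : ‖toLp 2 (A *ᵥ x)‖ ≤ r * ‖toLp 2 x‖ := by
  set T := toEuclideanCLM (n := n) (𝕜 := 𝕜) A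
  have hT : ‖T‖₊ ≤ r.toNNReal := by
    rw [← ENNReal.coe_le_coe, ← T.spectralRadius_eq_nnnorm (hA.isSelfAdjoint.map _)]
    refine iSup₂_le fun μ hμ => ?_
    rw [AlgEquiv.spectrum_eq] at hμ
    rw [← norm_toNNReal]
    exact ENNReal.coe_le_coe.mpr (Real.toNNReal_le_toNNReal (hspec μ hμ))
  calc ‖toLp 2 (A *ᵥ x)‖ = ‖T (toLp 2 x)‖ := rfl
    _ ≤ ‖T‖ * ‖toLp 2 x‖ := T.le_opNorm _
    _ ≤ r * ‖toLp 2 x‖ := by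
      gcongr
      simpa [← NNReal.coe_le_coe, hr] using hT

noncomputable def conjSqrtDiagonal (π : n → ℝ) (M : Matrix n n ℝ) : Matrix n n ℝ :=
  diagonal (fun i => √(π i)) * M * (diagonal fun i => √(π i))⁻¹

variable {π : n → ℝ} {M : Matrix n n ℝ}

lemma inv_diagonal_sqrt (hπ : ∀ i, 0 < π i) :
    (diagonal fun i => √(π i))⁻¹ = diagonal fun i => (√(π i))⁻¹ := by
  refine inv_eq_left_inv ?_
  rw [diagonal_mul_diagonal, ← diagonal_one]
  congr 1
  funext i
  exact inv_mul_cancel₀ (Real.sqrt_pos.mpr (hπ i)).ne'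

lemma conjSqrtDiagonal_apply (hπ : ∀ i, 0 < π i) (i j : n) :
    conjSqrtDiagonal π M i j = √(π i) * M i j / √(π j) := by
  simp [conjSqrtDiagonal, inv_diagonal_sqrt hπ, div_eq_mul_inv]

lemma spectrum_conjSqrtDiagonal (hπ : ∀ i, 0 < π i) :
    spectrum ℝ (conjSqrtDiagonal π M) = spectrum ℝ M :=
  spectrum_mul_mul_inv (isUnit_diagonal.mpr (Pi.isUnit_iff.mpr fun i =>
    (Real.sqrt_pos.mpr (hπ i)).ne'.isUnit)) M

lemma isHermitian_conjSqrtDiagonal (hπ : ∀ i, 0 < π i)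
    (hDB : ∀ i j, π i * M i j = π j * M j i) : (conjSqrtDiagonal π M).IsHermitian := by
  rw [isHermitian_iff_isSymm]
  ext i j
  simp only [transpose_apply, conjSqrtDiagonal_apply hπ]
  rw [div_eq_div_iff (Real.sqrt_pos.mpr (hπ i)).ne' (Real.sqrt_pos.mpr (hπ j)).ne']
  linear_combination M j i * Real.mul_self_sqrt (hπ j).le
    - M i j * Real.mul_self_sqrt (hπ i).le - hDB i j

lemma vecMul_conjSqrtDiagonal (hπ : ∀ i, 0 < π i) :
    (fun i => (√(π i))⁻¹) ᵥ* conjSqrtDiagonal π M = fun j => (∑ i, M i j) / √(π j) := by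
  funext j
  simp only [vecMul, dotProduct, conjSqrtDiagonal_apply hπ, Finset.sum_div]
  refine Finset.sum_congr rfl fun i _ => ?_
  field_simp [(Real.sqrt_pos.mpr (hπ i)).ne']

end Matrix

lemma specRad_nonneg {k : ℕ} (M : Matrix (Fin k) (Fin k) ℝ) : 0 ≤ specRad M :=
  Real.sSup_nonneg (by rintro _ ⟨μ, -, rfl⟩; exact norm_nonneg μ)

lemma abs_le_specRad {k : ℕ} {M : Matrix (Fin k) (Fin k) ℝ} {μ : ℝ}
    (hμ : μ ∈ spectrum ℝ M) : |μ| ≤ specRad M := by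
  have hμℂ : (μ : ℂ) ∈ spectrum ℂ (M.map (Complex.ofReal ·)) := by
    rw [mem_spectrum_iff_isRoot_charpoly] at hμ ⊢
    exact charpoly_map M Complex.ofRealHom ▸ hμ.map
  have hbdd : BddAbove {x : ℝ | ∃ ν ∈ spectrum ℂ (M.map (Complex.ofReal ·)), x = ‖ν‖} :=
    ((finite_spectrum _).image (‖·‖)).bddAbove.mono
      (by rintro _ ⟨ν, hν, rfl⟩; exact ⟨ν, hν, rfl⟩)
  exact le_csSup hbdd ⟨μ, hμℂ, (Complex.norm_real μ).symm⟩

lemma norm_toLp_eq_sqrt_sum_sq {n : Type*} [Fintype n] (v : n → ℝ) :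
    ‖toLp 2 v‖ = √(∑ i, v i ^ 2) := by
  simp [EuclideanSpace.norm_eq]

theorem stmt_6_general {k : ℕ} (M : Matrix (Fin k) (Fin k) ℝ) (π : Fin k → ℝ)
    (hπ : ∀ i, 0 < π i)
    (hDB : ∀ i j, π i * M i j = π j * M j i) :
    Real.sqrt ((∑ j, (∑ i, M i j) ^ 2 / π j) / (∑ j, 1 / π j)) ≤ specRad M := by
  have hS := isHermitian_conjSqrtDiagonal hπ hDB
  have hspec : ∀ μ ∈ spectrum ℝ (conjSqrtDiagonal π M), ‖μ‖ ≤ specRad M := fun μ hμ =>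
    abs_le_specRad (spectrum_conjSqrtDiagonal hπ ▸ hμ)
  have hbound := hS.norm_mulVec_le (specRad_nonneg M) hspec fun i => (√(π i))⁻¹
  have hSx : conjSqrtDiagonal π M *ᵥ (fun i => (√(π i))⁻¹) =
      fun j => (∑ i, M i j) / √(π j) := by
    rw [← vecMul_conjSqrtDiagonal hπ, ← mulVec_transpose,
      ← conjTranspose_eq_transpose_of_trivial, hS.eq]
  have hsq : ∀ j, √(π j) ^ 2 = π j := fun j => Real.sq_sqrt (hπ j).le
  rw [hSx, norm_toLp_eq_sqrt_sum_sq, norm_toLp_eq_sqrt_sum_sq] at hbound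
  simp only [← one_div, div_pow, one_pow, hsq] at hbound
  rw [Real.sqrt_div' _ (Finset.sum_nonneg fun j _ => (one_div_pos.mpr (hπ j)).le)]
  exact div_le_of_le_mul₀ (Real.sqrt_nonneg _) (specRad_nonneg M) hbound

/-- For a nonnegative matrix M satisfying detailed balance
`π_i m_{ij} = π_j m_{ji}` with `π_i > 0`, and column sums `c_j = Σ_i m_{ij}`,
the spectral radius satisfies
`ρ(M) ≥ √( (Σ_j c_j²/π_j) / (Σ_j 1/π_j) )`. -/
theorem stmt_6 {k : ℕ} (M : Matrix (Fin k) (Fin k) ℝ) (π : Fin k → ℝ)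
    (hπ : ∀ i, 0 < π i)
    (hM : ∀ i j, 0 ≤ M i j)
    (hDB : ∀ i j, π i * M i j = π j * M j i) :
    Real.sqrt ((∑ j, (∑ i, M i j) ^ 2 / π j) / (∑ j, 1 / π j)) ≤ specRad M :=
  stmt_6_general M π hπ hDB
end

section
/- Let 0 < r_1 < r_2, φ > 0, and for θ ∈ [0, min(r_1, r_2/φ)] let R_0(θ) = ½[ r_1 + r_2 - (φ+1)θ + √( (r_1 + r_2 - (φ+1)θ)² - 4 r_1 r_2 + 4(φ r_1 + r_2)θ ) ]. Then R_0 is strictly decreasing on its domain. -/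
/-- For 0 < r₁ < r₂ and φ > 0, the function
`R₀(θ) = ½[r₁ + r₂ - (φ+1)θ + √((r₁+r₂-(φ+1)θ)² - 4r₁r₂ + 4(φr₁+r₂)θ)]`
is strictly decreasing on `[0, min(r₁, r₂/φ)]`. -/
theorem stmt_13 (r₁ r₂ φ : ℝ) (h1 : 0 < r₁) (h12 : r₁ < r₂) (hφ : 0 < φ) :
    StrictAntiOn (fun θ : ℝ =>
      (r₁ + r₂ - (φ + 1) * θ +
        Real.sqrt ((r₁ + r₂ - (φ + 1) * θ) ^ 2 - 4 * r₁ * r₂ +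
          4 * (φ * r₁ + r₂) * θ)) / 2)
      (Set.Icc 0 (min r₁ (r₂ / φ))) := by
  intro x hx y hy hxy
  simp only
  set Dx : ℝ := (r₁ + r₂ - (φ + 1) * x) ^ 2 - 4 * r₁ * r₂ + 4 * (φ * r₁ + r₂) * x with hDx
  set Dy : ℝ := (r₁ + r₂ - (φ + 1) * y) ^ 2 - 4 * r₁ * r₂ + 4 * (φ * r₁ + r₂) * y with hDy
  have hDxnn : 0 ≤ Dx := by
    have : Dx = (r₂ - φ * x - r₁ + x) ^ 2 + 4 * φ * x ^ 2 := by rw [hDx]; ring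
    nlinarith [sq_nonneg (r₂ - φ * x - r₁ + x), sq_nonneg x]
  have hDynn : 0 ≤ Dy := by
    have : Dy = (r₂ - φ * y - r₁ + y) ^ 2 + 4 * φ * y ^ 2 := by rw [hDy]; ring
    nlinarith [sq_nonneg (r₂ - φ * y - r₁ + y), sq_nonneg y]
  set sx : ℝ := Real.sqrt Dx with hsx
  have hsxnn : 0 ≤ sx := Real.sqrt_nonneg _
  have hsxsq : sx ^ 2 = Dx := Real.sq_sqrt hDxnn
  -- key: (φ+1) * sx > (φ+1)^2 * x + (1-φ)*(r₂-r₁)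
  have hkey : (φ + 1) ^ 2 * x + (1 - φ) * (r₂ - r₁) < (φ + 1) * sx := by
    have hid : ((φ + 1) * sx) ^ 2 - ((φ + 1) ^ 2 * x + (1 - φ) * (r₂ - r₁)) ^ 2
        = 4 * φ * (r₂ - r₁) ^ 2 := by
      have : ((φ + 1) * sx) ^ 2 = (φ + 1) ^ 2 * Dx := by rw [mul_pow, hsxsq]
      rw [this, hDx]; ring
    nlinarith [mul_nonneg (le_of_lt (by positivity : (0:ℝ) < φ + 1)) hsxnn,
      sq_nonneg ((φ + 1) * sx + ((φ + 1) ^ 2 * x + (1 - φ) * (r₂ - r₁))),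
      sq_nonneg (r₂ - r₁), mul_pos hφ (pow_pos (by linarith : (0:ℝ) < r₂ - r₁) 2)]
  have hc : 0 < sx + (φ + 1) * (y - x) := by nlinarith
  have hsqlt : Real.sqrt Dy < sx + (φ + 1) * (y - x) := by
    rw [Real.sqrt_lt' hc]
    have : (sx + (φ + 1) * (y - x)) ^ 2
        = Dx + 2 * (φ + 1) * (y - x) * sx + (φ + 1) ^ 2 * (y - x) ^ 2 := by
      rw [← hsxsq]; ring
    rw [this, hDx, hDy]
    nlinarith [mul_lt_mul_of_pos_left hkey (by linarith : (0:ℝ) < 2 * (y - x))]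
  have hA : r₁ + r₂ - (φ + 1) * y + (sx + (φ + 1) * (y - x))
      = r₁ + r₂ - (φ + 1) * x + sx := by ring
  have : r₁ + r₂ - (φ + 1) * y + Real.sqrt Dy < r₁ + r₂ - (φ + 1) * x + sx := by
    calc r₁ + r₂ - (φ + 1) * y + Real.sqrt Dy
        < r₁ + r₂ - (φ + 1) * y + (sx + (φ + 1) * (y - x)) := by linarith
      _ = r₁ + r₂ - (φ + 1) * x + sx := hA
  linarith
end

section
/- Let π_i > 0 and r_i > 0 for i=1,…,k, with at least one r_i > 1. With F(λ) = Σ_{i: r_i + 1/λ > 1} [ π_i log(r_i + 1/λ) - r_i π_i (1 - λ/(1+λ r_i)) ], one has F(λ) → +∞ as λ → 0⁺ and lim_{λ→+∞} F(λ) = Σ_{i: r_i > 1} π_i (log r_i - (r_i - 1)) < 0. Hence F has a zero λ* ∈ (0,∞). -/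
open scoped Classical

open Filter

/-!
Put `s = 1/λ`. Writing `1 - λ/(1+λr) = 1 - 1/(r+s)`, the `i`-th summand of `F(λ)` is
`φᵢ(r_i + s)` with `φᵢ(t) = π_i log t - r_i π_i (1 - 1/t)`, and since `φᵢ(1) = 0` the
restriction to the active set `{i | 1 < r_i + s}` amounts to evaluating `φᵢ` at
`max (r_i + s) 1`. Hence `F(1/s) = H(s)` for a function `H` that is continuous on all of `ℝ`:
both limits of `F` are then `H(s) → +∞` as `s → ∞` (each `φᵢ` grows like `log`) and the value
`H(0) = Σ_{r_i > 1} π_i (log r_i - (r_i - 1))`, which is negative because `log x < x - 1`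
for `x > 1`. The zero of `F` comes from the intermediate value theorem applied to `H`.
-/

open Finset

theorem Filter.Tendsto.finset_sum_atTop {ι α M : Type*} [AddCommMonoid M] [PartialOrder M]
    [IsOrderedAddMonoid M] {l : Filter α} {f : ι → α → M} {s : Finset ι} (hs : s.Nonempty)
    (h : ∀ i ∈ s, Tendsto (f i) l atTop) : Tendsto (fun x => ∑ i ∈ s, f i x) l atTop := by
  induction hs using Finset.Nonempty.cons_induction with
  | singleton i => simpa using h i (mem_singleton_self i)
  | cons i s hi hs ih =>
    simp only [sum_cons]
    exact (h i (mem_cons_self i s)).atTop_add_atTop (ih fun j hj => h j (mem_cons_of_mem hj))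

theorem Finset.sum_filter_lt_eq_sum_max {ι α M : Type*} [LinearOrder α] [AddCommMonoid M]
    (s : Finset ι) {a : α} (f : ι → α → M) (hf : ∀ i, f i a = 0) (t : ι → α) :
    ∑ i ∈ s.filter (fun i => a < t i), f i (t i) = ∑ i ∈ s, f i (max (t i) a) := by
  rw [sum_filter]
  refine sum_congr rfl fun i _ => ?_
  split_ifs with h
  · rw [max_eq_left h.le]
  · rw [max_eq_right (not_lt.1 h), hf]

noncomputable def summand (p r t : ℝ) : ℝ := p * Real.log t - r * p * (1 - t⁻¹)

theorem summand_one (p r : ℝ) : summand p r 1 = 0 := by simp [summand]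

theorem summand_self (p : ℝ) {r : ℝ} (hr : r ≠ 0) :
    summand p r r = p * (Real.log r - (r - 1)) := by
  simp only [summand]
  field_simp

theorem summand_add_inv (p r : ℝ) {x : ℝ} (hx : x ≠ 0) :
    summand p r (r + 1 / x) = p * Real.log (r + 1 / x) - r * p * (1 - x / (1 + x * r)) := by
  rw [summand, add_div' _ _ _ hx, inv_div, mul_comm r x, add_comm (x * r)]

theorem continuousOn_summand (p r : ℝ) : ContinuousOn (summand p r) {0}ᶜ :=
  (continuousOn_const.mul Real.continuousOn_log).sub
    (continuousOn_const.mul (continuousOn_const.sub continuousOn_inv₀))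

theorem tendsto_summand_atTop {p : ℝ} (hp : 0 < p) (r : ℝ) :
    Tendsto (summand p r) atTop atTop := by
  have hlog : Tendsto (fun t => p * Real.log t) atTop atTop :=
    Real.tendsto_log_atTop.const_mul_atTop hp
  have hrest : Tendsto (fun t : ℝ => -(r * p * (1 - t⁻¹))) atTop (nhds (-(r * p * (1 - 0)))) :=
    ((tendsto_const_nhds.sub tendsto_inv_atTop_zero).const_mul _).neg
  exact (hlog.atTop_add hrest).congr fun t => (sub_eq_add_neg _ _).symm

section

variable {ι : Type*} [Fintype ι]

noncomputable def activeSum (w r : ι → ℝ) (x : ℝ) : ℝ :=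
  ∑ i ∈ univ.filter (fun i => 1 < r i + 1 / x),
    (w i * Real.log (r i + 1 / x) - r i * w i * (1 - x / (1 + x * r i)))

noncomputable def clippedSum (w r : ι → ℝ) (s : ℝ) : ℝ :=
  ∑ i, summand (w i) (r i) (max (r i + s) 1)

theorem activeSum_eq_clippedSum (w r : ι → ℝ) {x : ℝ} (hx : x ≠ 0) :
    activeSum w r x = clippedSum w r (1 / x) := by
  rw [activeSum, clippedSum, ← sum_filter_lt_eq_sum_max _ _ fun i => summand_one (w i) (r i)]
  exact sum_congr rfl fun i _ => (summand_add_inv _ _ hx).symm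

theorem continuous_clippedSum (w r : ι → ℝ) : Continuous (clippedSum w r) :=
  continuous_finsetSum _ fun i _ =>
    (continuousOn_summand _ _).comp_continuous (by fun_prop)
      fun s => (one_pos.trans_le (le_max_right _ _)).ne'

theorem clippedSum_zero (w r : ι → ℝ) :
    clippedSum w r 0 = ∑ i ∈ univ.filter (fun i => 1 < r i), w i * (Real.log (r i) - (r i - 1)) := by
  simp only [clippedSum, add_zero]
  rw [← sum_filter_lt_eq_sum_max _ _ fun i => summand_one (w i) (r i)]
  exact sum_congr rfl fun i hi => summand_self _ (one_pos.trans (mem_filter.1 hi).2).ne'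

theorem tendsto_clippedSum_atTop [Nonempty ι] {w : ι → ℝ} (hw : ∀ i, 0 < w i) (r : ι → ℝ) :
    Tendsto (clippedSum w r) atTop atTop :=
  Tendsto.finset_sum_atTop univ_nonempty fun i _ =>
    (tendsto_summand_atTop (hw i) (r i)).comp <|
      tendsto_atTop_mono (fun _ => le_max_left _ _) (tendsto_atTop_add_const_left _ _ tendsto_id)

theorem sum_filter_log_sub_neg {w r : ι → ℝ} (hw : ∀ i, 0 < w i) (hsup : ∃ i, 1 < r i) :
    ∑ i ∈ univ.filter (fun i => 1 < r i), w i * (Real.log (r i) - (r i - 1)) < 0 := by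
  obtain ⟨i₀, hi₀⟩ := hsup
  refine sum_neg (fun i hi => ?_) ⟨i₀, mem_filter.2 ⟨mem_univ _, hi₀⟩⟩
  have hri : 1 < r i := (mem_filter.1 hi).2
  exact mul_neg_of_pos_of_neg (hw i) (sub_neg.2 (Real.log_lt_sub_one_of_pos (by linarith) hri.ne'))

end

theorem stmt_16_general {k : ℕ} (π r : Fin k → ℝ) (hπ : ∀ i, 0 < π i)
    (hsup : ∃ i, 1 < r i) :
    Tendsto (fun x : ℝ =>
        ∑ i ∈ Finset.univ.filter (fun i => 1 < r i + 1 / x),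
          (π i * Real.log (r i + 1 / x) -
            r i * π i * (1 - x / (1 + x * r i))))
      (nhdsWithin 0 (Set.Ioi 0)) atTop ∧
    Tendsto (fun x : ℝ =>
        ∑ i ∈ Finset.univ.filter (fun i => 1 < r i + 1 / x),
          (π i * Real.log (r i + 1 / x) -
            r i * π i * (1 - x / (1 + x * r i))))
      atTop
      (nhds (∑ i ∈ Finset.univ.filter (fun i => 1 < r i),
        π i * (Real.log (r i) - (r i - 1)))) ∧
    (∑ i ∈ Finset.univ.filter (fun i => 1 < r i),
        π i * (Real.log (r i) - (r i - 1))) < 0 ∧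
    ∃ lam : ℝ, 0 < lam ∧
      (∑ i ∈ Finset.univ.filter (fun i => 1 < r i + 1 / lam),
        (π i * Real.log (r i + 1 / lam) -
          r i * π i * (1 - lam / (1 + lam * r i)))) = 0 := by
  have : Nonempty (Fin k) := let ⟨i, _⟩ := hsup; ⟨i⟩
  have hinv : Tendsto (fun x : ℝ => 1 / x) atTop (nhds 0) := by
    simpa only [one_div] using tendsto_inv_atTop_zero
  have hinv₀ : Tendsto (fun x : ℝ => 1 / x) (nhdsWithin 0 (Set.Ioi 0)) atTop := by
    simpa only [one_div] using tendsto_inv_nhdsGT_zero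
  have hneg := sum_filter_log_sub_neg hπ hsup
  refine ⟨?_, ?_, hneg, ?_⟩
  · refine ((tendsto_clippedSum_atTop hπ r).comp hinv₀).congr' ?_
    filter_upwards [self_mem_nhdsWithin] with x hx
    exact (activeSum_eq_clippedSum π r (ne_of_gt hx)).symm
  · rw [← clippedSum_zero]
    refine (((continuous_clippedSum π r).tendsto 0).comp hinv).congr' ?_
    filter_upwards [eventually_ne_atTop 0] with x hx
    exact (activeSum_eq_clippedSum π r hx).symm
  · obtain ⟨b, hb, hb₀⟩ :=
      ((tendsto_clippedSum_atTop hπ r).eventually (eventually_ge_atTop 0)).and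
        (eventually_ge_atTop 0) |>.exists
    obtain ⟨s, hs, hs₀⟩ := intermediate_value_Icc hb₀ (continuous_clippedSum π r).continuousOn
      ⟨(clippedSum_zero π r).le.trans hneg.le, hb⟩
    have hs_pos : 0 < s := hs.1.lt_of_ne fun h => by
      rw [← h, clippedSum_zero] at hs₀; exact hneg.ne hs₀
    refine ⟨1 / s, by positivity, ?_⟩
    rw [← activeSum, activeSum_eq_clippedSum π r (by positivity), one_div_one_div, hs₀]

/-- With `π_i > 0`, `r_i > 0` and at least one `r_i > 1`, the
function `F(λ) = Σ_{i: r_i + 1/λ > 1} [π_i log(r_i + 1/λ) -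
r_i π_i (1 - λ/(1+λ r_i))]` tends to +∞ as λ → 0⁺ and tends to
`Σ_{i: r_i > 1} π_i (log r_i - (r_i - 1)) < 0` as λ → +∞; hence F has a zero
λ* ∈ (0,∞). -/
theorem stmt_16 {k : ℕ} (π r : Fin k → ℝ) (hπ : ∀ i, 0 < π i)
    (hr : ∀ i, 0 < r i) (hsup : ∃ i, 1 < r i) :
    Tendsto (fun x : ℝ =>
        ∑ i ∈ Finset.univ.filter (fun i => 1 < r i + 1 / x),
          (π i * Real.log (r i + 1 / x) -
            r i * π i * (1 - x / (1 + x * r i))))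
      (nhdsWithin 0 (Set.Ioi 0)) atTop ∧
    Tendsto (fun x : ℝ =>
        ∑ i ∈ Finset.univ.filter (fun i => 1 < r i + 1 / x),
          (π i * Real.log (r i + 1 / x) -
            r i * π i * (1 - x / (1 + x * r i))))
      atTop
      (nhds (∑ i ∈ Finset.univ.filter (fun i => 1 < r i),
        π i * (Real.log (r i) - (r i - 1)))) ∧
    (∑ i ∈ Finset.univ.filter (fun i => 1 < r i),
        π i * (Real.log (r i) - (r i - 1))) < 0 ∧
    ∃ lam : ℝ, 0 < lam ∧
      (∑ i ∈ Finset.univ.filter (fun i => 1 < r i + 1 / lam),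
        (π i * Real.log (r i + 1 / lam) -
          r i * π i * (1 - lam / (1 + lam * r i)))) = 0 :=
  stmt_16_general π r hπ hsup
end

section
/- Let π ∈ (0,1)^k, M_ε and M be nonnegative k×k matrices with M_ε ≥ M entrywise and M_ε → M entrywise as ε → 0. Define T(M, x) = 𝟙 - exp(-D_π^{-1} M^⊤ D_π x) componentwise on [0,1]^k and let τ(M) denote the maximal fixed point of x = T(M,x) (obtained as the decreasing limit of iterates starting from 𝟙). Then τ(M_ε) → τ(M) componentwise as ε → 0. -/
set_option maxHeartbeats 800000

open Filter

noncomputable def Tmap {k : ℕ} (π : Fin k → ℝ) (N : Matrix (Fin k) (Fin k) ℝ)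
    (x : Fin k → ℝ) : Fin k → ℝ :=
  fun i => 1 - Real.exp (-(π i)⁻¹ * ∑ j, N j i * (π j * x j))

lemma Tmap_mono {k : ℕ} {π : Fin k → ℝ} (hπ : ∀ i, 0 < π i)
    (N : Matrix (Fin k) (Fin k) ℝ) (hN : ∀ i j, 0 ≤ N i j)
    {x y : Fin k → ℝ} (hxy : ∀ j, x j ≤ y j) : ∀ i, Tmap π N x i ≤ Tmap π N y i := by
  intro i
  unfold Tmap
  have hsum : ∑ j, N j i * (π j * x j) ≤ ∑ j, N j i * (π j * y j) :=
    Finset.sum_le_sum fun j _ =>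
      mul_le_mul_of_nonneg_left (mul_le_mul_of_nonneg_left (hxy j) (hπ j).le) (hN j i)
  have hc : -(π i)⁻¹ ≤ 0 := neg_nonpos.2 (inv_nonneg.2 (hπ i).le)
  have := mul_le_mul_of_nonpos_left hsum hc
  linarith [Real.exp_le_exp.2 this]

lemma Tmap_monoN {k : ℕ} {π : Fin k → ℝ} (hπ : ∀ i, 0 < π i)
    {N N' : Matrix (Fin k) (Fin k) ℝ} (h : ∀ i j, N i j ≤ N' i j)
    {x : Fin k → ℝ} (hx : ∀ j, 0 ≤ x j) : ∀ i, Tmap π N x i ≤ Tmap π N' x i := by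
  intro i
  unfold Tmap
  have hsum : ∑ j, N j i * (π j * x j) ≤ ∑ j, N' j i * (π j * x j) :=
    Finset.sum_le_sum fun j _ =>
      mul_le_mul_of_nonneg_right (h j i) (mul_nonneg (hπ j).le (hx j))
  have hc : -(π i)⁻¹ ≤ 0 := neg_nonpos.2 (inv_nonneg.2 (hπ i).le)
  have := mul_le_mul_of_nonpos_left hsum hc
  linarith [Real.exp_le_exp.2 this]

lemma Tmap_mem {k : ℕ} {π : Fin k → ℝ} (hπ : ∀ i, 0 < π i)
    (N : Matrix (Fin k) (Fin k) ℝ) (hN : ∀ i j, 0 ≤ N i j)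
    {x : Fin k → ℝ} (hx : ∀ j, 0 ≤ x j) : ∀ i, Tmap π N x i ∈ Set.Icc (0 : ℝ) 1 := by
  intro i
  unfold Tmap
  constructor
  · have hS : (0:ℝ) ≤ ∑ j, N j i * (π j * x j) :=
      Finset.sum_nonneg fun j _ => mul_nonneg (hN j i) (mul_nonneg (hπ j).le (hx j))
    have h1 : -(π i)⁻¹ * ∑ j, N j i * (π j * x j) ≤ 0 :=
      mul_nonpos_of_nonpos_of_nonneg (neg_nonpos.2 (inv_nonneg.2 (hπ i).le)) hS
    have := Real.exp_le_one_iff.2 h1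
    linarith
  · linarith [Real.exp_pos (-(π i)⁻¹ * ∑ j, N j i * (π j * x j))]

lemma tendsto_Tmap {k : ℕ} {π : Fin k → ℝ} {ι : Type*} {l : Filter ι}
    {Nf : ι → Matrix (Fin k) (Fin k) ℝ} {N : Matrix (Fin k) (Fin k) ℝ}
    (hN : ∀ a b, Tendsto (fun t => Nf t a b) l (nhds (N a b)))
    {xf : ι → Fin k → ℝ} {x : Fin k → ℝ}
    (hx : ∀ j, Tendsto (fun t => xf t j) l (nhds (x j))) :
    ∀ i, Tendsto (fun t => Tmap π (Nf t) (xf t) i) l (nhds (Tmap π N x i)) := by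
  intro i
  unfold Tmap
  have hsum : Tendsto (fun t => ∑ j, Nf t j i * (π j * xf t j)) l
      (nhds (∑ j, N j i * (π j * x j))) :=
    tendsto_finset_sum _ fun j _ => (hN j i).mul (tendsto_const_nhds.mul (hx j))
  exact tendsto_const_nhds.sub
    ((Real.continuous_exp.tendsto _).comp (tendsto_const_nhds.mul hsum))

lemma iterate_step {k : ℕ} (π : Fin k → ℝ) (N : Matrix (Fin k) (Fin k) ℝ)
    (y : Fin k → ℝ) (n : ℕ) :
    (Tmap π N)^[n+1] y = Tmap π N ((Tmap π N)^[n] y) :=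
  Function.iterate_succ_apply' _ _ _

/-- Any subsolution in [0,1]^k is below any point dominating all fixed points. -/
lemma le_of_subsolution {k : ℕ} {π : Fin k → ℝ} (hπ : ∀ i, 0 < π i)
    (N : Matrix (Fin k) (Fin k) ℝ) (hN : ∀ i j, 0 ≤ N i j)
    (t : Fin k → ℝ)
    (hmax : ∀ x : Fin k → ℝ, (∀ i, x i ∈ Set.Icc (0 : ℝ) 1) →
      (∀ i, x i = Tmap π N x i) → ∀ i, x i ≤ t i)
    (y : Fin k → ℝ) (hy : ∀ i, y i ∈ Set.Icc (0 : ℝ) 1)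
    (hsub : ∀ i, y i ≤ Tmap π N y i) : ∀ i, y i ≤ t i := by
  have hmem : ∀ n i, (Tmap π N)^[n] y i ∈ Set.Icc (0 : ℝ) 1 := by
    intro n
    induction n with
    | zero => exact hy
    | succ n ih =>
      rw [iterate_step]
      exact Tmap_mem hπ N hN (fun j => (ih j).1)
  have hmono : ∀ n i, (Tmap π N)^[n] y i ≤ (Tmap π N)^[n+1] y i := by
    intro n
    induction n with
    | zero => simpa [iterate_step] using hsub
    | succ n ih =>
      rw [iterate_step π N y (n+1)]
      rw [iterate_step π N y n] at ih ⊢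
      exact Tmap_mono hπ N hN ih
  have hmono' : ∀ i, Monotone fun n => (Tmap π N)^[n] y i := fun i =>
    monotone_nat_of_le_succ fun n => hmono n i
  have hbdd : ∀ i, BddAbove (Set.range fun n => (Tmap π N)^[n] y i) := by
    intro i
    exact ⟨1, by rintro _ ⟨n, rfl⟩; exact (hmem n i).2⟩
  set z : Fin k → ℝ := fun i => ⨆ n, (Tmap π N)^[n] y i with hz
  have hlim : ∀ i, Tendsto (fun n => (Tmap π N)^[n] y i) atTop (nhds (z i)) := fun i =>
    tendsto_atTop_ciSup (hmono' i) (hbdd i)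
  have hzmem : ∀ i, z i ∈ Set.Icc (0 : ℝ) 1 := by
    intro i
    constructor
    · exact ge_of_tendsto (hlim i) (Eventually.of_forall fun n => (hmem n i).1)
    · exact le_of_tendsto (hlim i) (Eventually.of_forall fun n => (hmem n i).2)
  have hfix : ∀ i, z i = Tmap π N z i := by
    intro i
    have h1 : Tendsto (fun n => (Tmap π N)^[n+1] y i) atTop (nhds (z i)) :=
      (hlim i).comp (tendsto_add_atTop_nat 1)
    have h2 : Tendsto (fun n => Tmap π N ((Tmap π N)^[n] y) i) atTop
        (nhds (Tmap π N z i)) :=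
      tendsto_Tmap (Nf := fun _ => N) (N := N) (xf := fun n => (Tmap π N)^[n] y)
        (x := z) (fun a b => tendsto_const_nhds) hlim i
    have h3 : Tendsto (fun n => (Tmap π N)^[n+1] y i) atTop (nhds (Tmap π N z i)) := by
      simpa only [iterate_step] using h2
    exact tendsto_nhds_unique h1 h3
  intro i
  have hyz : y i ≤ z i := by
    have := le_ciSup (hbdd i) 0
    simpa using this
  exact hyz.trans (hmax z hzmem hfix i)

/-- Iterates from 𝟙 dominate any fixed point in [0,1]^k. -/
lemma fixed_le_iterate {k : ℕ} {π : Fin k → ℝ} (hπ : ∀ i, 0 < π i)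
    (N : Matrix (Fin k) (Fin k) ℝ) (hN : ∀ i j, 0 ≤ N i j)
    (t : Fin k → ℝ) (ht : ∀ i, t i ∈ Set.Icc (0 : ℝ) 1)
    (hfix : ∀ i, t i = Tmap π N t i) :
    ∀ n i, t i ≤ (Tmap π N)^[n] (fun _ => 1) i := by
  intro n
  induction n with
  | zero => intro i; simpa using (ht i).2
  | succ n ih =>
    intro i
    rw [iterate_step, hfix i]
    exact Tmap_mono hπ N hN ih i

/-- Iterates from 𝟙 converge to the maximal fixed point. -/
lemma iterate_tendsto_tau {k : ℕ} {π : Fin k → ℝ} (hπ : ∀ i, 0 < π i)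
    (N : Matrix (Fin k) (Fin k) ℝ) (hN : ∀ i j, 0 ≤ N i j)
    (t : Fin k → ℝ) (ht : ∀ i, t i ∈ Set.Icc (0 : ℝ) 1)
    (hfix : ∀ i, t i = Tmap π N t i)
    (hmax : ∀ x : Fin k → ℝ, (∀ i, x i ∈ Set.Icc (0 : ℝ) 1) →
      (∀ i, x i = Tmap π N x i) → ∀ i, x i ≤ t i) :
    ∀ i, Tendsto (fun n => (Tmap π N)^[n] (fun _ => 1) i) atTop (nhds (t i)) := by
  have hmem : ∀ n i, (Tmap π N)^[n] (fun _ => (1:ℝ)) i ∈ Set.Icc (0 : ℝ) 1 := by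
    intro n
    induction n with
    | zero => intro i; simp
    | succ n ih =>
      rw [iterate_step]
      exact Tmap_mem hπ N hN fun j => (ih j).1
  have hanti : ∀ n i, (Tmap π N)^[n+1] (fun _ => (1:ℝ)) i ≤ (Tmap π N)^[n] (fun _ => 1) i := by
    intro n
    induction n with
    | zero =>
      intro i
      have := (Tmap_mem hπ N hN (x := fun _ => (1:ℝ)) (fun _ => zero_le_one) i).2
      simpa [iterate_step] using this
    | succ n ih =>
      rw [iterate_step π N _ (n+1)]
      rw [iterate_step π N _ n] at ih ⊢
      exact Tmap_mono hπ N hN ih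
  have hanti' : ∀ i, Antitone fun n => (Tmap π N)^[n] (fun _ => (1:ℝ)) i := fun i =>
    antitone_nat_of_succ_le fun n => hanti n i
  have hbdd : ∀ i, BddBelow (Set.range fun n => (Tmap π N)^[n] (fun _ => (1:ℝ)) i) := by
    intro i
    exact ⟨0, by rintro _ ⟨n, rfl⟩; exact (hmem n i).1⟩
  set z : Fin k → ℝ := fun i => ⨅ n, (Tmap π N)^[n] (fun _ => (1:ℝ)) i with hz
  have hlim : ∀ i, Tendsto (fun n => (Tmap π N)^[n] (fun _ => (1:ℝ)) i) atTop (nhds (z i)) :=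
    fun i => tendsto_atTop_ciInf (hanti' i) (hbdd i)
  have hzmem : ∀ i, z i ∈ Set.Icc (0 : ℝ) 1 := by
    intro i
    constructor
    · exact ge_of_tendsto (hlim i) (Eventually.of_forall fun n => (hmem n i).1)
    · exact le_of_tendsto (hlim i) (Eventually.of_forall fun n => (hmem n i).2)
  have hzfix : ∀ i, z i = Tmap π N z i := by
    intro i
    have h1 : Tendsto (fun n => (Tmap π N)^[n+1] (fun _ => (1:ℝ)) i) atTop (nhds (z i)) :=
      (hlim i).comp (tendsto_add_atTop_nat 1)
    have h2 : Tendsto (fun n => Tmap π N ((Tmap π N)^[n] (fun _ => (1:ℝ))) i) atTop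
        (nhds (Tmap π N z i)) :=
      tendsto_Tmap (Nf := fun _ => N) (N := N)
        (xf := fun n => (Tmap π N)^[n] (fun _ => (1:ℝ))) (x := z)
        (fun a b => tendsto_const_nhds) hlim i
    have h3 : Tendsto (fun n => (Tmap π N)^[n+1] (fun _ => (1:ℝ)) i) atTop
        (nhds (Tmap π N z i)) := by
      simpa only [iterate_step] using h2
    exact tendsto_nhds_unique h1 h3
  have hzt : ∀ i, z i = t i := by
    intro i
    have h1 : z i ≤ t i := hmax z hzmem hzfix i
    have h2 : t i ≤ z i :=
      ge_of_tendsto (hlim i)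
        (Eventually.of_forall fun n => fixed_le_iterate hπ N hN t ht hfix n i)
    linarith
  intro i
  rw [← hzt i]
  exact hlim i

/-- Let π ∈ (0,1)^k and let `tau N` denote, for each nonnegative
k×k matrix N, the maximal fixed point in [0,1]^k of
`x_i = 1 - exp(-(π_i)⁻¹ Σ_j N_{ji} π_j x_j)` (the final-size map
`T(N,x) = 𝟙 - exp(-D_π⁻¹ Nᵀ D_π x)`). If M_ε ≥ M entrywise, all are
nonnegative, and M_ε → M entrywise as ε → 0⁺, then
`tau (M_ε) → tau M` componentwise as ε → 0⁺. -/
theorem stmt_19 {k : ℕ} (π : Fin k → ℝ) (hπ : ∀ i, π i ∈ Set.Ioo (0 : ℝ) 1)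
    (tau : Matrix (Fin k) (Fin k) ℝ → Fin k → ℝ)
    (htau : ∀ N : Matrix (Fin k) (Fin k) ℝ, (∀ i j, 0 ≤ N i j) →
      (∀ i, tau N i ∈ Set.Icc (0 : ℝ) 1) ∧
      (∀ i, tau N i =
        1 - Real.exp (-(π i)⁻¹ * ∑ j, N j i * (π j * tau N j))) ∧
      (∀ x : Fin k → ℝ, (∀ i, x i ∈ Set.Icc (0 : ℝ) 1) →
        (∀ i, x i = 1 - Real.exp (-(π i)⁻¹ * ∑ j, N j i * (π j * x j))) →
        ∀ i, x i ≤ tau N i))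
    (M : Matrix (Fin k) (Fin k) ℝ) (hM : ∀ i j, 0 ≤ M i j)
    (Meps : ℝ → Matrix (Fin k) (Fin k) ℝ)
    (hMe_nonneg : ∀ ε > (0 : ℝ), ∀ i j, 0 ≤ Meps ε i j)
    (hMe_ge : ∀ ε > (0 : ℝ), ∀ i j, M i j ≤ Meps ε i j)
    (hMe_lim : ∀ i j, Tendsto (fun ε => Meps ε i j)
      (nhdsWithin 0 (Set.Ioi 0)) (nhds (M i j))) :
    ∀ i, Tendsto (fun ε => tau (Meps ε) i)
      (nhdsWithin 0 (Set.Ioi 0)) (nhds (tau M i)) := by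
  have hπ' : ∀ i, 0 < π i := fun i => (hπ i).1
  obtain ⟨hMmem, hMfix, hMmax⟩ := htau M hM
  have hMfix' : ∀ i, tau M i = Tmap π M (tau M) i := hMfix
  have hMmax' : ∀ x : Fin k → ℝ, (∀ i, x i ∈ Set.Icc (0 : ℝ) 1) →
      (∀ i, x i = Tmap π M x i) → ∀ i, x i ≤ tau M i := hMmax
  -- Lower bound: tau M ≤ tau (Meps ε) for every ε > 0
  have hlow : ∀ ε > (0:ℝ), ∀ i, tau M i ≤ tau (Meps ε) i := by
    intro ε hε i
    obtain ⟨hem, hef, hemax⟩ := htau (Meps ε) (hMe_nonneg ε hε)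
    refine le_of_subsolution hπ' (Meps ε) (hMe_nonneg ε hε) (tau (Meps ε)) hemax
      (tau M) hMmem ?_ i
    intro j
    calc tau M j = Tmap π M (tau M) j := hMfix' j
    _ ≤ Tmap π (Meps ε) (tau M) j :=
      Tmap_monoN hπ' (hMe_ge ε hε) (fun j => (hMmem j).1) j
  -- Upper bound via iterates
  have hup : ∀ ε > (0:ℝ), ∀ n i,
      tau (Meps ε) i ≤ (Tmap π (Meps ε))^[n] (fun _ => 1) i := by
    intro ε hε n i
    obtain ⟨hem, hef, hemax⟩ := htau (Meps ε) (hMe_nonneg ε hε)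
    exact fixed_le_iterate hπ' (Meps ε) (hMe_nonneg ε hε) (tau (Meps ε)) hem hef n i
  -- Continuity of the iterates in the matrix
  have hcont : ∀ n i, Tendsto (fun ε => (Tmap π (Meps ε))^[n] (fun _ => 1) i)
      (nhdsWithin 0 (Set.Ioi 0)) (nhds ((Tmap π M)^[n] (fun _ => 1) i)) := by
    intro n
    induction n with
    | zero => intro i; exact tendsto_const_nhds
    | succ n ih =>
      intro i
      simp only [iterate_step]
      exact tendsto_Tmap (Nf := Meps) (N := M)
        (xf := fun ε => (Tmap π (Meps ε))^[n] (fun _ => 1))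
        (x := (Tmap π M)^[n] (fun _ => 1)) (fun a b => hMe_lim a b) ih i
  -- Convergence of iterates of M to tau M
  have hiter : ∀ i, Tendsto (fun n => (Tmap π M)^[n] (fun _ => 1) i)
      atTop (nhds (tau M i)) :=
    iterate_tendsto_tau hπ' M hM (tau M) hMmem hMfix' hMmax'
  intro i
  rw [Metric.tendsto_nhds]
  intro δ hδ
  have hmono_le : ∀ n, tau M i ≤ (Tmap π M)^[n] (fun _ => 1) i :=
    fun n => fixed_le_iterate hπ' M hM (tau M) hMmem hMfix' n i
  obtain ⟨n, hn⟩ : ∃ n, (Tmap π M)^[n] (fun _ => 1) i < tau M i + δ/3 :=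
    ((hiter i).eventually
      (eventually_lt_nhds (by linarith : tau M i < tau M i + δ/3))).exists
  have hev : ∀ᶠ ε in nhdsWithin (0:ℝ) (Set.Ioi 0),
      (Tmap π (Meps ε))^[n] (fun _ => 1) i <
        (Tmap π M)^[n] (fun _ => 1) i + δ/3 :=
    (hcont n i).eventually (eventually_lt_nhds (by linarith))
  have hevpos : ∀ᶠ ε in nhdsWithin (0:ℝ) (Set.Ioi 0), (0:ℝ) < ε :=
    eventually_mem_nhdsWithin
  filter_upwards [hev, hevpos] with ε h1 h2
  have hl : tau M i ≤ tau (Meps ε) i := hlow ε h2 i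
  have hu2 : tau (Meps ε) i ≤ (Tmap π (Meps ε))^[n] (fun _ => 1) i := hup ε h2 n i
  rw [Real.dist_eq, abs_lt]
  constructor <;> nlinarith [hmono_le n]
end
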